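/- arXiv:2505.13067 — 2 statements merged into one kernel-verified Lean document; each statement's English description precedes it below -/
import Mathlib

section
/- If a process tensor's Choi state across the bipartition between the two time segments is entangled (not separable), then the process tensor cannot be written as a composition of conditioned instruments T[A] = Σᵢ Φᵢ(A(Iᵢ(ρ₀))), i.e. the process requires quantum memory. -/
open Matrix
open scoped Kronecker Classical ComplexOrder

noncomputable section

/-- A density matrix: positive semidefinite with unit trace. -/
def IsDensity {N : Type*} [Fintype N] (ρ : Matrix N N ℂ) : Prop :=
  ρ.PosSemidef ∧ ρ.trace = 1

/-- Outer product `|ψ⟩⟨ψ|`. -/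
def outer {N : Type*} (ψ : N → ℂ) : Matrix N N ℂ :=
  Matrix.of fun i j => ψ i * star (ψ j)

/-- Squared norm of a vector. -/
def vnormSq {N : Type*} [Fintype N] (ψ : N → ℂ) : ℝ := ∑ x, ‖ψ x‖ ^ 2

/-- Partial transpose with respect to the first tensor factor. -/
def pt₁ {m n : Type*} (ρ : Matrix (m × n) (m × n) ℂ) : Matrix (m × n) (m × n) ℂ :=
  Matrix.of fun p q => ρ (q.1, p.2) (p.1, q.2)

/-- Partial transpose with respect to the second tensor factor. -/
def pt₂ {m n : Type*} (ρ : Matrix (m × n) (m × n) ℂ) : Matrix (m × n) (m × n) ℂ :=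
  Matrix.of fun p q => ρ (p.1, q.2) (q.1, p.2)

/-- Partial trace over the first tensor factor. -/
def ptr₁ {m n : Type*} [Fintype m] (ρ : Matrix (m × n) (m × n) ℂ) : Matrix n n ℂ :=
  Matrix.of fun j l => ∑ i, ρ (i, j) (i, l)

/-- Partial trace over the second tensor factor. -/
def ptr₂ {m n : Type*} [Fintype n] (ρ : Matrix (m × n) (m × n) ℂ) : Matrix m m ℂ :=
  Matrix.of fun i k => ∑ j, ρ (i, j) (k, j)

/-- Trace norm (sum of singular values): `‖A‖₁ = tr √(AᴴA)`. -/
def traceNorm {N : Type*} [Fintype N] [DecidableEq N] (A : Matrix N N ℂ) : ℝ :=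
  (((Matrix.posSemidef_conjTranspose_mul_self A).1.eigenvectorUnitary.1 *
      diagonal (((↑) : ℝ → ℂ) ∘ (Real.sqrt ·) ∘
        (Matrix.posSemidef_conjTranspose_mul_self A).1.eigenvalues) *
      (star (Matrix.posSemidef_conjTranspose_mul_self A).1.eigenvectorUnitary :
        Matrix N N ℂ)).trace).re

/-- Purity `tr ρ²` (real part). -/
def purity {N : Type*} [Fintype N] (ρ : Matrix N N ℂ) : ℝ := ((ρ * ρ).trace).re

/-- Separability of a bipartite density matrix. -/
def Separable {m n : Type*} [Fintype m] [Fintype n]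
    (ρ : Matrix (m × n) (m × n) ℂ) : Prop :=
  ∃ (k : ℕ) (p : Fin k → ℝ) (σ : Fin k → Matrix m m ℂ) (τ : Fin k → Matrix n n ℂ),
    (∀ i, 0 ≤ p i) ∧ (∑ i, p i = 1) ∧ (∀ i, IsDensity (σ i)) ∧ (∀ i, IsDensity (τ i)) ∧
    ρ = ∑ i, (p i : ℂ) • (σ i ⊗ₖ τ i)

/-- Extension `E ⊗ id` of a map on the first factor to a bipartite space. -/
def tensExtA {s n : Type*} (E : Matrix s s ℂ → Matrix s s ℂ)
    (X : Matrix (s × n) (s × n) ℂ) : Matrix (s × n) (s × n) ℂ :=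
  Matrix.of fun p q => E (Matrix.of fun i k => X (i, p.2) (k, q.2)) p.1 q.1

/-- Extension `id ⊗ A` of a map on the second factor to a bipartite space. -/
def tensExtSys {e s : Type*} (A : Matrix s s ℂ → Matrix s s ℂ)
    (X : Matrix (e × s) (e × s) ℂ) : Matrix (e × s) (e × s) ℂ :=
  Matrix.of fun p q => A (Matrix.of fun i k => X (p.1, i) (q.1, k)) p.2 q.2

/-- Complete positivity: `E ⊗ id_n` maps PSD matrices to PSD matrices for every `n`. -/
def IsCP {s : Type*} [Fintype s] (E : Matrix s s ℂ → Matrix s s ℂ) : Prop :=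
  ∀ (n : ℕ) (X : Matrix (s × Fin n) (s × Fin n) ℂ), X.PosSemidef → (tensExtA E X).PosSemidef

/-- Trace preservation. -/
def IsTP {s : Type*} [Fintype s] (E : Matrix s s ℂ → Matrix s s ℂ) : Prop :=
  ∀ X, (E X).trace = X.trace

/-- The maximally entangled unit vector `|Ψ⁺⟩ = (1/√d) Σᵢ |i⟩⊗|i⟩`. -/
def maxEntVec (d : ℕ) : Fin d × Fin d → ℂ :=
  fun p => if p.1 = p.2 then (((Real.sqrt d)⁻¹ : ℝ) : ℂ) else 0

/-- The Choi state `χ[E] = (E ⊗ id)(|Ψ⁺⟩⟨Ψ⁺|)` of a map `E`. -/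
def ChoiMap {d : ℕ} (E : Matrix (Fin d) (Fin d) ℂ → Matrix (Fin d) (Fin d) ℂ) :
    Matrix (Fin d × Fin d) (Fin d × Fin d) ℂ :=
  tensExtA E (outer (maxEntVec d))

/-- Choi state of a single-intervention process tensor `T`, viewed as a function of the
initial system state and the intervention (a CP map). The first index pair is the first
time segment (intervention input leg, initial state leg), the second pair is the second
time segment (final state leg, intervention output leg). It is obtained by letting `T`
act on halves of maximally entangled pairs, i.e. on matrix units with `1/d` weights. -/
def ChoiPT {d : ℕ}
    (T : Matrix (Fin d) (Fin d) ℂ →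
      (Matrix (Fin d) (Fin d) ℂ → Matrix (Fin d) (Fin d) ℂ) → Matrix (Fin d) (Fin d) ℂ) :
    Matrix ((Fin d × Fin d) × (Fin d × Fin d)) ((Fin d × Fin d) × (Fin d × Fin d)) ℂ :=
  Matrix.of fun p q => (d : ℂ)⁻¹ * (d : ℂ)⁻¹ *
    (T (Matrix.single p.1.2 q.1.2 1)
       (fun ρ => ρ p.1.1 q.1.1 • Matrix.single p.2.2 q.2.2 1)) p.2.1 q.2.1

/-- A single-intervention process tensor has classical memory if it is a composition of
conditioned instruments: `T[ρ, A] = Σᵢ Φᵢ(A(Iᵢ(ρ)))` with `{Iᵢ}` a quantum instrument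
(each `Iᵢ` CP, their sum trace preserving) and each `Φᵢ` a CPT map. -/
def HasClassicalMemory {d : ℕ}
    (T : Matrix (Fin d) (Fin d) ℂ →
      (Matrix (Fin d) (Fin d) ℂ → Matrix (Fin d) (Fin d) ℂ) → Matrix (Fin d) (Fin d) ℂ) :
    Prop :=
  ∃ (k : ℕ) (I Φ : Fin k → (Matrix (Fin d) (Fin d) ℂ → Matrix (Fin d) (Fin d) ℂ)),
    (∀ i, IsLinearMap ℂ (I i)) ∧ (∀ i, IsCP (I i)) ∧ IsTP (fun ρ => ∑ i, I i ρ) ∧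
    (∀ i, IsLinearMap ℂ (Φ i)) ∧ (∀ i, IsCP (Φ i)) ∧ (∀ i, IsTP (Φ i)) ∧
    (∀ ρ A, T ρ A = ∑ i, Φ i (A (I i ρ)))

/-- Action of a Kraus operator on the first factor of a bipartite vector: `(L ⊗ I)ψ`. -/
def lact {m n : Type*} [Fintype m] (L : Matrix m m ℂ) (ψ : m × n → ℂ) : m × n → ℂ :=
  fun p => ∑ i, L p.1 i * ψ (i, p.2)

/-- Concurrence of a pure bipartite state: `C(ψ) = √(2(1 − tr((tr₂|ψ⟩⟨ψ|)²)))`. -/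
def concPure {m n : Type*} [Fintype m] [Fintype n] (ψ : m × n → ℂ) : ℝ :=
  Real.sqrt (2 * (1 - purity (ptr₂ (outer ψ))))

/-- The set of average values `Σₖ pₖ f(ψₖ)` over all pure-state decompositions of `ρ`. -/
def decompAvgs {m n : Type*} [Fintype m] [Fintype n]
    (f : (m × n → ℂ) → ℝ) (ρ : Matrix (m × n) (m × n) ℂ) : Set ℝ :=
  { r | ∃ (k : ℕ) (p : Fin k → ℝ) (ψ : Fin k → m × n → ℂ),
      (∀ i, 0 < p i) ∧ (∑ i, p i = 1) ∧ (∀ i, vnormSq (ψ i) = 1) ∧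
      (ρ = ∑ i, (p i : ℂ) • outer (ψ i)) ∧ r = ∑ i, p i * f (ψ i) }

/-- An entanglement monotone: a nonnegative function of pure bipartite states whose
average does not increase under local CP operations (given by Kraus operators) on the
system (first) factor. -/
def IsEntMonotone {m n : Type*} [Fintype m] [Fintype n] (f : (m × n → ℂ) → ℝ) : Prop :=
  (∀ ψ, 0 ≤ f ψ) ∧
  ∀ (k : ℕ) (L : Fin k → Matrix m m ℂ), (∑ j, (L j)ᴴ * L j) = 1 →
    ∀ ψ : m × n → ℂ, vnormSq ψ = 1 →
      (∑ j, if vnormSq (lact (L j) ψ) = 0 then 0 else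
        vnormSq (lact (L j) ψ) *
          f (fun x => (((Real.sqrt (vnormSq (lact (L j) ψ)))⁻¹ : ℝ) : ℂ) * lact (L j) ψ x))
        ≤ f ψ

end

/-! For a process with classical memory the intervention links the two time segments only
through the classical outcome `i`, so its Choi state splits as `Σᵢ χ[Iᵢ] ⊗ χ[Φᵢ]`.
Each `χ[Φᵢ]` is a state, and the `χ[Iᵢ]` are positive semidefinite with traces summing to one
because `Σᵢ Iᵢ` is trace preserving; normalizing them exhibits the Choi state as separable. -/

namespace Matrix.PosSemidef

variable {m : Type*} [Fintype m] {C : Matrix m m ℂ}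

lemma trace_eq_ofReal_re (hC : C.PosSemidef) : C.trace = (C.trace.re : ℂ) :=
  Complex.eq_re_of_ofReal_le (r := 0) (by rw [Complex.ofReal_zero]; exact hC.trace_nonneg)

lemma exists_isDensity_smul_eq [Nonempty m] (hC : C.PosSemidef) :
    ∃ σ, IsDensity σ ∧ C = (C.trace.re : ℂ) • σ := by
  by_cases h0 : C.trace.re = 0
  · refine ⟨((Fintype.card m : ℝ)⁻¹ : ℂ) • 1, ⟨PosSemidef.one.smul ?_, ?_⟩, ?_⟩
    · exact_mod_cast inv_nonneg.mpr (Nat.cast_nonneg _)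
    · simp [trace_one]
    · rw [h0, Complex.ofReal_zero, zero_smul, ← hC.trace_eq_zero_iff, hC.trace_eq_ofReal_re, h0,
        Complex.ofReal_zero]
  · refine ⟨((C.trace.re)⁻¹ : ℂ) • C, ⟨hC.smul ?_, ?_⟩, ?_⟩
    · exact_mod_cast inv_nonneg.mpr (Complex.nonneg_iff.mp hC.trace_nonneg).1
    · rw [trace_smul, smul_eq_mul, inv_mul_eq_one₀ (by exact_mod_cast h0)]
      exact hC.trace_eq_ofReal_re.symm
    · rw [smul_smul, ← Complex.ofReal_inv, ← Complex.ofReal_mul, mul_inv_cancel₀ h0,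
        Complex.ofReal_one, one_smul]

end Matrix.PosSemidef

lemma separable_sum_kronecker {m n : Type*} [Fintype m] [Fintype n] {k : ℕ}
    {C : Fin k → Matrix m m ℂ} {D : Fin k → Matrix n n ℂ} (hC : ∀ i, (C i).PosSemidef)
    (htr : ∑ i, (C i).trace = 1) (hD : ∀ i, IsDensity (D i)) :
    Separable (∑ i, C i ⊗ₖ D i) := by
  have : Nonempty m := by
    by_contra h
    rw [not_nonempty_iff] at h
    simp [trace_eq_zero_of_isEmpty] at htr
  choose σ hσ hCσ using fun i => (hC i).exists_isDensity_smul_eq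
  refine ⟨k, fun i => (C i).trace.re, σ, D,
    fun i => (Complex.nonneg_iff.mp (hC i).trace_nonneg).1, ?_, hσ, hD, ?_⟩
  · simpa using congrArg Complex.re htr
  · refine Finset.sum_congr rfl fun i _ => ?_
    rw [← smul_kronecker, ← hCσ]

lemma trace_tensExtA {s n : Type*} [Fintype s] [Fintype n] {E : Matrix s s ℂ → Matrix s s ℂ}
    (hE : IsTP E) (X : Matrix (s × n) (s × n) ℂ) : (tensExtA E X).trace = X.trace := by
  simp only [trace, diag, tensExtA, of_apply, Fintype.sum_prod_type]
  rw [Finset.sum_comm]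
  conv_rhs => rw [Finset.sum_comm]
  exact Finset.sum_congr rfl fun b _ => hE (of fun i k => X (i, b) (k, b))

lemma tensExtA_sum {s n ι : Type*} [Fintype ι] (E : ι → Matrix s s ℂ → Matrix s s ℂ)
    (X : Matrix (s × n) (s × n) ℂ) :
    tensExtA (fun ρ => ∑ i, E i ρ) X = ∑ i, tensExtA (E i) X := by
  ext p q
  simp [tensExtA, Matrix.sum_apply]

lemma outer_maxEntVec_apply (d : ℕ) (a b c e : Fin d) :
    outer (maxEntVec d) (a, b) (c, e) = if a = b ∧ c = e then (d : ℂ)⁻¹ else 0 := by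
  have hsq : (Real.sqrt d : ℂ)⁻¹ * (Real.sqrt d : ℂ)⁻¹ = (d : ℂ)⁻¹ := by
    rw [← mul_inv, ← Complex.ofReal_mul, Real.mul_self_sqrt (Nat.cast_nonneg d),
      Complex.ofReal_natCast]
  by_cases hab : a = b <;> by_cases hce : c = e <;> simp [outer, maxEntVec, hab, hce, hsq]

lemma trace_outer_maxEntVec {d : ℕ} (hd : 0 < d) : (outer (maxEntVec d)).trace = 1 := by
  simp [trace, Fintype.sum_prod_type, outer_maxEntVec_apply, hd.ne']

section ChoiMap

variable {d : ℕ}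

lemma choiMap_apply {E : Matrix (Fin d) (Fin d) ℂ → Matrix (Fin d) (Fin d) ℂ}
    (hE : IsLinearMap ℂ E) (a b c e : Fin d) :
    ChoiMap E (a, b) (c, e) = (d : ℂ)⁻¹ * E (single b e 1) a c := by
  have hblock :
      (of fun i k => outer (maxEntVec d) (i, b) (k, e)) = (d : ℂ)⁻¹ • single b e 1 := by
    ext i k
    rcases eq_or_ne i b with rfl | hib <;> rcases eq_or_ne k e with rfl | hke <;>
      simp [outer_maxEntVec_apply, *, Ne.symm]
  rw [ChoiMap, tensExtA, of_apply, hblock, hE.map_smul, Matrix.smul_apply, smul_eq_mul]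

lemma choiMap_posSemidef {E : Matrix (Fin d) (Fin d) ℂ → Matrix (Fin d) (Fin d) ℂ}
    (hE : IsCP E) : (ChoiMap E).PosSemidef :=
  hE d _ (posSemidef_vecMulVec_self_star _)

lemma isDensity_choiMap (hd : 0 < d) {E : Matrix (Fin d) (Fin d) ℂ → Matrix (Fin d) (Fin d) ℂ}
    (hCP : IsCP E) (hTP : IsTP E) : IsDensity (ChoiMap E) :=
  ⟨choiMap_posSemidef hCP, by rw [ChoiMap, trace_tensExtA hTP, trace_outer_maxEntVec hd]⟩

lemma sum_trace_choiMap_eq_one (hd : 0 < d) {ι : Type*} [Fintype ι]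
    {E : ι → Matrix (Fin d) (Fin d) ℂ → Matrix (Fin d) (Fin d) ℂ}
    (hTP : IsTP fun ρ => ∑ i, E i ρ) : ∑ i, (ChoiMap (E i)).trace = 1 := by
  rw [← trace_sum]
  unfold ChoiMap
  rw [← tensExtA_sum, trace_tensExtA hTP, trace_outer_maxEntVec hd]

lemma choiPT_eq_sum_kronecker {k : ℕ}
    {T : Matrix (Fin d) (Fin d) ℂ →
      (Matrix (Fin d) (Fin d) ℂ → Matrix (Fin d) (Fin d) ℂ) → Matrix (Fin d) (Fin d) ℂ}
    {I Φ : Fin k → Matrix (Fin d) (Fin d) ℂ → Matrix (Fin d) (Fin d) ℂ}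
    (hI : ∀ i, IsLinearMap ℂ (I i)) (hΦ : ∀ i, IsLinearMap ℂ (Φ i))
    (hT : ∀ ρ A, T ρ A = ∑ i, Φ i (A (I i ρ))) :
    ChoiPT T = ∑ i, ChoiMap (I i) ⊗ₖ ChoiMap (Φ i) := by
  ext ⟨⟨a, b⟩, c, e⟩ ⟨⟨a', b'⟩, c', e'⟩
  simp only [ChoiPT, of_apply, hT, Matrix.sum_apply, Finset.mul_sum, kroneckerMap_apply,
    choiMap_apply (hI _), choiMap_apply (hΦ _), (hΦ _).map_smul, Matrix.smul_apply, smul_eq_mul]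
  exact Finset.sum_congr rfl fun i _ => by ring

end ChoiMap

/-- if the Choi state of a process tensor is entangled across the cut
between the two time segments, the process cannot be written as a composition of
conditioned instruments, i.e. it requires quantum memory. -/
theorem stmt10 {d : ℕ} (hd : 0 < d)
    (T : Matrix (Fin d) (Fin d) ℂ →
      (Matrix (Fin d) (Fin d) ℂ → Matrix (Fin d) (Fin d) ℂ) → Matrix (Fin d) (Fin d) ℂ)
    (hent : ¬ Separable (ChoiPT T)) : ¬ HasClassicalMemory T := by
  rintro ⟨k, I, Φ, hIlin, hICP, hITP, hΦlin, hΦCP, hΦTP, hT⟩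
  apply hent
  rw [choiPT_eq_sum_kronecker hIlin hΦlin hT]
  exact separable_sum_kronecker (fun i => choiMap_posSemidef (hICP i))
    (sum_trace_choiMap_eq_one hd hITP) fun i => isDensity_choiMap hd (hΦCP i) (hΦTP i)
end

section
/- Upper bound on the maximal-decomposition I-concurrence: for any bipartite density matrix ρ on H₁ ⊗ H₂ with reduced states ρ₁ = tr₂ ρ and ρ₂ = tr₁ ρ, the maximum over pure-state decompositions of the average pure-state concurrence satisfies F^♯[ρ] = max_{{pₖ,ψₖ}} Σₖ pₖ √(2(1 − tr((tr₂|ψₖ⟩⟨ψₖ|)²))) ≤ min{√(2(1 − tr ρ₁²)), √(2(1 − tr ρ₂²))}. -/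
open Matrix
open scoped Kronecker Classical ComplexOrder

/-!
Take a pure-state decomposition `ρ = Σ pₖ |ψₖ⟩⟨ψₖ|` and write `uₖ` for the purity of the
reduced state of `ψₖ`. Concavity of `√` bounds the average concurrence by `√(2(1 - Σ pₖ uₖ))`.
Partial traces are linear and the purity is convex (it is the squared Frobenius norm on Hermitian
matrices), so `tr ρ₂² ≤ Σ pₖ uₖ`; the same holds for `tr ρ₁²`, because for a pure state both
reduced states are `M Mᴴ` and `(Mᴴ M)ᵀ` for its coefficient matrix `M` and have equal purity.
-/

open Finset

def coeffMatrix {m n : Type*} (ψ : m × n → ℂ) : Matrix m n ℂ := Matrix.of (Function.curry ψ)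

section PartialTrace

variable {m n ι : Type*}

lemma ptr₂_outer [Fintype n] (ψ : m × n → ℂ) :
    ptr₂ (outer ψ) = coeffMatrix ψ * (coeffMatrix ψ)ᴴ := by
  ext i k
  simp [ptr₂, outer, coeffMatrix, mul_apply]

lemma ptr₁_outer [Fintype m] (ψ : m × n → ℂ) :
    ptr₁ (outer ψ) = ((coeffMatrix ψ)ᴴ * coeffMatrix ψ)ᵀ := by
  ext j l
  simp [ptr₁, outer, coeffMatrix, mul_apply, mul_comm]

lemma isHermitian_ptr₂_outer [Fintype n] (ψ : m × n → ℂ) : (ptr₂ (outer ψ)).IsHermitian := by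
  rw [ptr₂_outer]
  exact isHermitian_mul_conjTranspose_self _

lemma isHermitian_ptr₁_outer [Fintype m] (ψ : m × n → ℂ) : (ptr₁ (outer ψ)).IsHermitian := by
  rw [ptr₁_outer]
  exact (isHermitian_conjTranspose_mul_self _).transpose

lemma purity_ptr₁_outer [Fintype m] [Fintype n] (ψ : m × n → ℂ) :
    purity (ptr₁ (outer ψ)) = purity (ptr₂ (outer ψ)) := by
  rw [purity, purity, ptr₁_outer, ptr₂_outer, ← transpose_mul, trace_transpose, Matrix.mul_assoc,
    trace_mul_comm]
  simp only [Matrix.mul_assoc]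

lemma ptr₂_sum_smul [Fintype n] [Fintype ι] (c : ι → ℂ) (A : ι → Matrix (m × n) (m × n) ℂ) :
    ptr₂ (∑ i, c i • A i) = ∑ i, c i • ptr₂ (A i) := by
  ext a b
  simp only [ptr₂, of_apply, Matrix.sum_apply, Matrix.smul_apply, smul_eq_mul, mul_sum]
  exact sum_comm

lemma ptr₁_sum_smul [Fintype m] [Fintype ι] (c : ι → ℂ) (A : ι → Matrix (m × n) (m × n) ℂ) :
    ptr₁ (∑ i, c i • A i) = ∑ i, c i • ptr₁ (A i) := by
  ext a b
  simp only [ptr₁, of_apply, Matrix.sum_apply, Matrix.smul_apply, smul_eq_mul, mul_sum]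
  exact sum_comm

end PartialTrace

section Purity

variable {N ι : Type*} [Fintype N] [Fintype ι]

lemma purity_eq_sum_norm_sq {σ : Matrix N N ℂ} (hσ : σ.IsHermitian) :
    purity σ = ∑ a, ∑ b, ‖σ a b‖ ^ 2 := by
  simp only [purity, trace, diag_apply, mul_apply, Complex.re_sum]
  refine sum_congr rfl fun a _ => sum_congr rfl fun b _ => ?_
  rw [← hσ.apply b a, Complex.star_def, Complex.mul_conj, Complex.normSq_eq_norm_sq,
    Complex.ofReal_re]

lemma purity_sum_smul_le (p : ι → ℝ) (σ : ι → Matrix N N ℂ) (hp : ∀ i, 0 ≤ p i)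
    (hp1 : ∑ i, p i = 1) (hσ : ∀ i, (σ i).IsHermitian) :
    purity (∑ i, (p i : ℂ) • σ i) ≤ ∑ i, p i * purity (σ i) := by
  have hmix : (∑ i, (p i : ℂ) • σ i).IsHermitian :=
    isSelfAdjoint_sum _ fun i _ => (hσ i).smul (Complex.conj_ofReal (p i))
  have hentry (a b : N) : ‖(∑ i, (p i : ℂ) • σ i) a b‖ ^ 2 ≤ ∑ i, p i * ‖σ i a b‖ ^ 2 := by
    have hconv : ConvexOn ℝ Set.univ (norm ^ 2 : ℂ → ℝ) :=
      (convexOn_norm convex_univ).pow (fun _ _ => norm_nonneg _) 2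
    simpa [Matrix.sum_apply, Complex.real_smul] using
      hconv.map_sum_le (t := univ) (w := p) (p := fun i => σ i a b)
        (fun i _ => hp i) hp1 (fun _ _ => Set.mem_univ _)
  calc purity (∑ i, (p i : ℂ) • σ i)
      ≤ ∑ a, ∑ b, ∑ i, p i * ‖σ i a b‖ ^ 2 := by
        rw [purity_eq_sum_norm_sq hmix]
        gcongr with a _ b _
        exact hentry a b
    _ = ∑ i, p i * purity (σ i) := by
        simp_rw [purity_eq_sum_norm_sq (hσ _), mul_sum]
        exact (sum_congr rfl fun _ _ => sum_comm).trans sum_comm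

end Purity

lemma purity_ptr₂_outer_le_one {m n : Type*} [Fintype m] [Fintype n] {ψ : m × n → ℂ}
    (hψ : vnormSq ψ = 1) : purity (ptr₂ (outer ψ)) ≤ 1 := by
  set r : m → ℝ := fun i => ∑ j, ‖ψ (i, j)‖ ^ 2
  have hentry (i k : m) : ‖ptr₂ (outer ψ) i k‖ ^ 2 ≤ r i * r k :=
    calc ‖ptr₂ (outer ψ) i k‖ ^ 2 ≤ (∑ j, ‖ψ (i, j)‖ * ‖ψ (k, j)‖) ^ 2 := by
          gcongr
          refine (norm_sum_le _ _).trans_eq (sum_congr rfl fun j _ => ?_)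
          rw [outer, of_apply, norm_mul, norm_star]
      _ ≤ r i * r k := sum_mul_sq_le_sq_mul_sq _ _ _
  have hr : ∑ i, r i = 1 := by rw [← hψ, vnormSq, Fintype.sum_prod_type]
  calc purity (ptr₂ (outer ψ)) ≤ ∑ i, ∑ k, r i * r k := by
        rw [purity_eq_sum_norm_sq (isHermitian_ptr₂_outer ψ)]
        gcongr with i _ k _
        exact hentry i k
    _ = 1 := by rw [← sum_mul_sum, hr, one_mul]

lemma sum_mul_concPure_le {m n ι : Type*} [Fintype m] [Fintype n] [Fintype ι] (p : ι → ℝ)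
    (ψ : ι → m × n → ℂ) (hp : ∀ i, 0 ≤ p i) (hp1 : ∑ i, p i = 1)
    (hψ : ∀ i, vnormSq (ψ i) = 1) :
    ∑ i, p i * concPure (ψ i) ≤ √(2 * (1 - ∑ i, p i * purity (ptr₂ (outer (ψ i))))) := by
  have hjensen := Real.strictConcaveOn_sqrt.concaveOn.le_map_sum (t := univ) (w := p)
    (p := fun i => 2 * (1 - purity (ptr₂ (outer (ψ i))))) (fun i _ => hp i) hp1
    fun i _ => by
      simp only [Set.mem_Ici]
      linarith [purity_ptr₂_outer_le_one (hψ i)]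
  have hmean : ∑ i, p i * (2 * (1 - purity (ptr₂ (outer (ψ i))))) =
      2 * (1 - ∑ i, p i * purity (ptr₂ (outer (ψ i)))) := by
    have hsplit : ∑ i, p i * (2 * (1 - purity (ptr₂ (outer (ψ i))))) =
        2 * ∑ i, p i - 2 * ∑ i, p i * purity (ptr₂ (outer (ψ i))) := by
      rw [mul_sum, mul_sum, ← sum_sub_distrib]
      exact sum_congr rfl fun i _ => by ring
    rw [hsplit, hp1]
    ring
  simpa only [concPure, smul_eq_mul, hmean] using hjensen

theorem stmt17_general {m n : Type*} [Fintype m] [Fintype n]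
    (ρ : Matrix (m × n) (m × n) ℂ) :
    sSup (decompAvgs concPure ρ) ≤
      min (Real.sqrt (2 * (1 - purity (ptr₂ ρ)))) (Real.sqrt (2 * (1 - purity (ptr₁ ρ)))) := by
  refine Real.sSup_le ?_ (le_min (Real.sqrt_nonneg _) (Real.sqrt_nonneg _))
  rintro _ ⟨k, p, ψ, hp, hp1, hψ, rfl, rfl⟩
  have hp₀ (i : Fin k) : 0 ≤ p i := (hp i).le
  have hρ₂ : purity (ptr₂ (∑ i, (p i : ℂ) • outer (ψ i))) ≤
      ∑ i, p i * purity (ptr₂ (outer (ψ i))) := by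
    rw [ptr₂_sum_smul]
    exact purity_sum_smul_le p _ hp₀ hp1 fun i => isHermitian_ptr₂_outer (ψ i)
  have hρ₁ : purity (ptr₁ (∑ i, (p i : ℂ) • outer (ψ i))) ≤
      ∑ i, p i * purity (ptr₂ (outer (ψ i))) := by
    rw [ptr₁_sum_smul]
    simpa only [purity_ptr₁_outer] using
      purity_sum_smul_le p _ hp₀ hp1 fun i => isHermitian_ptr₁_outer (ψ i)
  have hconc := sum_mul_concPure_le p ψ hp₀ hp1 hψ
  exact le_min (hconc.trans (Real.sqrt_le_sqrt (by linarith)))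
    (hconc.trans (Real.sqrt_le_sqrt (by linarith)))

/-- purity-based upper bound on the maximal-decomposition average
concurrence: `F^♯[ρ] ≤ min{√(2(1 − tr ρ₁²)), √(2(1 − tr ρ₂²))}`. -/
theorem stmt17 {m n : Type*} [Fintype m] [Fintype n]
    (ρ : Matrix (m × n) (m × n) ℂ) (hρ : IsDensity ρ) :
    sSup (decompAvgs concPure ρ) ≤
      min (Real.sqrt (2 * (1 - purity (ptr₂ ρ)))) (Real.sqrt (2 * (1 - purity (ptr₁ ρ)))) :=
  stmt17_general ρ
end
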